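/- arXiv:1812.02479 — 3 statements merged into one kernel-verified Lean document; each statement's English description precedes it below -/
import Mathlib

section
/- Let f ∈ L¹([−π,π]) with f = f_R + i·f_I, where f_R and f_I are real-valued and f_R is essentially positive, let A_n(f) ∈ ℝ^{n×n} be the Toeplitz matrix generated by f, A_R = A_n(f_R), Y_n the n×n exchange matrix, and E_n = A_R^{-1/2} A_n(f) A_R^{-1/2} − I_n. If the eigenvalues of the symmetric skew-centrosymmetric matrix Y_n E_n are λ₁, ..., λ_{m₁}, −λ₁, ..., −λ_{m₁} (with all λ_k > 0) together with n − 2m₁ zero eigenvalues, then the eigenvalues of A_R^{-1/2} (Y_n A_n(f)) A_R^{-1/2} are exactly ±√(1 + λ_k²) for k = 1, ..., m₁, together with n − 2m₁ eigenvalues each equal to 1 or −1. -/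
open MeasureTheory Matrix Filter

/-- The `k`-th Fourier coefficient of `f : [-π,π] → ℂ`. -/
noncomputable def fCoeff (f : ℝ → ℂ) (k : ℤ) : ℂ :=
  (1 / (2 * Real.pi)) * ∫ θ in (-Real.pi)..Real.pi, f θ * Complex.exp (-Complex.I * k * θ)

/-- The `n × n` Toeplitz matrix generated by `f`, with entries `a_{j-k}`. -/
noncomputable def toeplitzC (n : ℕ) (f : ℝ → ℂ) : Matrix (Fin n) (Fin n) ℂ :=
  Matrix.of fun j k => fCoeff f ((j : ℤ) - (k : ℤ))

/-- The `n × n` exchange matrix, with ones on the main anti-diagonal. -/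
def exchange (n : ℕ) : Matrix (Fin n) (Fin n) ℝ :=
  Matrix.of fun j k => if (j : ℕ) + (k : ℕ) + 1 = n then 1 else 0

/-!
Write `Y` for the exchange matrix, `K = Y E` and `N = A_R^{-1/2} (Y A) A_R^{-1/2}`. A real
Toeplitz matrix is persymmetric, `Y A Y = Aᵀ`, so `Y` commutes with `A_R` and hence with its
square root; this gives `N = K + Y`. Since `A_R^{-1/2} A_R A_R^{-1/2} = I`, the matrix `E` is
skew-symmetric, so the symmetric matrix `K` anticommutes with the involution `Y`. Consequently
`N² = K² + I`, so the squared eigenvalues of `N` are those of `K` shifted by one. Moreover, for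
`μ² ≠ 1` we have `(N + μ)(μY - 1) = -(μY + 1)(N - μ)` with both `μY ∓ 1` invertible, so `μ` and
`-μ` are eigenvalues of `N` of the same multiplicity. A multiset that is symmetric under
negation is determined by the multiset of its squares, which pins down the eigenvalues of `N`
away from `±1`.
-/

namespace Multiset

lemma count_neg_add_map_neg {G : Type*} [InvolutiveNeg G] [DecidableEq G] (t : Multiset G)
    (x : G) :
    count (-x) (t + t.map Neg.neg) = count x (t + t.map Neg.neg) := by
  have hneg (y : G) : count (-y) (t.map Neg.neg) = count y t :=
    count_map_eq_count' _ t neg_injective y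
  rw [count_add, count_add, hneg, ← hneg (-x), neg_neg, add_comm]

variable {R : Type*} [CommRing R] [NoZeroDivisors R] [DecidableEq R]

lemma count_sq_map_sq_of_eq_neg (s : Multiset R) {x : R} (hx : x = -x) :
    count (x ^ 2) (s.map (· ^ 2)) = count x s := by
  rw [count_map, count_eq_card_filter_eq]
  congr 1
  refine filter_congr fun a _ => ?_
  rw [sq_eq_sq_iff_eq_or_eq_neg, ← neg_eq_iff_eq_neg, ← hx, or_self]

lemma count_sq_map_sq (s : Multiset R) {x : R} (hx : x ≠ -x) :
    count (x ^ 2) (s.map (· ^ 2)) = count x s + count (-x) s := by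
  have hdisj : filter (fun a => x = a ∧ -x = a) s = 0 :=
    filter_eq_nil.2 fun a _ h => hx (h.1.trans h.2.symm)
  rw [count_map, count_eq_card_filter_eq s x, count_eq_card_filter_eq s (-x), ← card_add,
    filter_add_filter, hdisj, add_zero]
  congr 1
  refine filter_congr fun a _ => ?_
  rw [sq_eq_sq_iff_eq_or_eq_neg, ← neg_eq_iff_eq_neg]

lemma eq_of_map_sq_eq {s t : Multiset R} (hs : ∀ x, count (-x) s = count x s)
    (ht : ∀ x, count (-x) t = count x t) (h : s.map (· ^ 2) = t.map (· ^ 2)) : s = t := by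
  ext x
  have hcount := congrArg (count (x ^ 2)) h
  by_cases hx : x = -x
  · rwa [count_sq_map_sq_of_eq_neg s hx, count_sq_map_sq_of_eq_neg t hx] at hcount
  · rw [count_sq_map_sq s hx, count_sq_map_sq t hx, hs, ht] at hcount
    omega

lemma exists_eq_add_add_of_map_sq_eq {s t : Multiset R} {r : ℕ}
    (hs : ∀ x, x ^ 2 ≠ 1 → count (-x) s = count x s) (ht : ∀ x ∈ t, x ^ 2 ≠ 1)
    (h : s.map (· ^ 2) = (t + t.map Neg.neg).map (· ^ 2) + replicate r 1) :
    ∃ u : Multiset R, card u = r ∧ (∀ x ∈ u, x = 1 ∨ x = -1) ∧ s = t + t.map Neg.neg + u := by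
  have htt : ∀ x ∈ (t + t.map Neg.neg).map (· ^ 2), x ≠ 1 := by
    simp only [mem_map, mem_add]
    rintro _ ⟨x, hx | ⟨y, hy, rfl⟩, rfl⟩
    exacts [ht x hx, by rw [neg_sq]; exact ht y hy]
  have hsq (p : R → Prop) [DecidablePred p] :
      (s.filter (p ∘ (· ^ 2))).map (· ^ 2) =
        ((t + t.map Neg.neg).map (· ^ 2)).filter p + (replicate r 1).filter p := by
    rw [← filter_map, h, filter_add]
  refine ⟨s.filter (· ^ 2 = 1), ?_, fun x hx => sq_eq_one_iff.1 (mem_filter.1 hx).2, ?_⟩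
  · have := congrArg card (hsq (· = 1))
    rwa [card_map, filter_eq_nil.2 htt, filter_eq_self.2 fun _ => eq_of_mem_replicate,
      zero_add, card_replicate] at this
  · have hrest : s.filter (· ^ 2 ≠ 1) = t + t.map Neg.neg := by
      refine eq_of_map_sq_eq (fun x => ?_) (count_neg_add_map_neg t) ?_
      · rw [count_filter, count_filter, neg_sq]
        split_ifs with hx
        exacts [hs x hx, rfl]
      · refine (hsq (· ≠ 1)).trans ?_
        rw [filter_eq_self.2 htt, filter_eq_nil.2 fun _ hx => not_not.2 (eq_of_mem_replicate hx),
          add_zero]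
    rw [← hrest, add_comm]
    exact (filter_add_not _ s).symm

end Multiset

namespace Matrix
variable {n : Type*} [Fintype n] [DecidableEq n]

lemma commute_nonsing_inv_right {α : Type*} [CommRing α] {Y S : Matrix n n α}
    (h : Commute Y S) : Commute Y S⁻¹ := by
  by_cases hS : IsUnit S
  · lift S to (Matrix n n α)ˣ using hS
    rw [← coe_units_inv]
    exact h.units_inv_right
  · rw [nonsing_inv_eq_ringInverse, Ring.inverse_non_unit _ hS]
    exact Commute.zero_right Y

open scoped MatrixOrder ComplexOrder in
lemma PosSemidef.commute_of_commute_mul_self {𝕜 : Type*} [RCLike 𝕜] {S Y : Matrix n n 𝕜}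
    (hS : S.PosSemidef) (h : Commute Y (S * S)) : Commute Y S := by
  rw [← CFC.sqrt_mul_self S hS.nonneg]
  exact (h.symm.cfcₙ_nnreal _).symm

section Anticommute
variable {K : Type*} [Field K] {B Y : Matrix n n K}

lemma isUnit_det_smul_add_smul_one (hY : Y * Y = 1) {a b : K} (hab : a ^ 2 ≠ b ^ 2) :
    IsUnit (a • Y + b • (1 : Matrix n n K)).det := by
  refine isUnit_det_of_right_inverse (B := (a ^ 2 - b ^ 2)⁻¹ • (a • Y - b • 1)) ?_
  rw [mul_smul_comm, add_mul, mul_sub, mul_sub, smul_mul_smul, smul_mul_smul, smul_mul_smul,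
    smul_mul_smul, hY, Matrix.mul_one, Matrix.one_mul, ← sq, ← sq, mul_comm b a,
    sub_add_sub_cancel, Matrix.mul_one, ← sub_smul, smul_smul, inv_mul_cancel₀ (sub_ne_zero.2 hab),
    one_smul]

lemma add_mul_self_of_anticommute (hY : Y * Y = 1) (hB : B * Y = -(Y * B)) :
    (B + Y) * (B + Y) = B * B + 1 := by
  rw [add_mul, mul_add, mul_add, hB, hY]
  abel

lemma rank_add_sub_smul_eq_rank_add_add_smul (hY : Y * Y = 1) (hB : B * Y = -(Y * B)) {μ : K}
    (hμ : μ ^ 2 ≠ 1) : (B + Y - μ • 1).rank = (B + Y + μ • 1).rank := by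
  have key : (B + Y + μ • 1) * (μ • Y + (-1 : K) • 1) =
      ((-μ) • Y + (-1 : K) • 1) * (B + Y - μ • 1) := by
    simp only [add_mul, mul_add, mul_sub, Matrix.smul_mul, Matrix.mul_smul,
      Matrix.one_mul, Matrix.mul_one, hY, hB, smul_neg, smul_smul]
    module
  calc (B + Y - μ • 1).rank = (((-μ) • Y + (-1 : K) • 1) * (B + Y - μ • 1)).rank :=
        (rank_mul_eq_right_of_isUnit_det _ _
          (isUnit_det_smul_add_smul_one hY (by rwa [neg_sq, neg_one_sq]))).symm
    _ = (B + Y + μ • 1).rank := by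
      rw [← key, rank_mul_eq_left_of_isUnit_det _ _
        (isUnit_det_smul_add_smul_one hY (by rwa [neg_one_sq]))]

end Anticommute

namespace IsHermitian
variable {𝕜 : Type*} [RCLike 𝕜] {A : Matrix n n 𝕜}

lemma rank_cfc (hA : A.IsHermitian) (f : ℝ → ℝ) :
    (cfc f A).rank = Fintype.card {i // f (hA.eigenvalues i) ≠ 0} := by
  rw [cfc_eq hA f, IsHermitian.cfc, Unitary.conjStarAlgAut_apply, ← Unitary.coe_star]
  simp [-isUnit_iff_ne_zero, -Unitary.coe_star, rank_diagonal]

lemma roots_charpoly_cfc (hA : A.IsHermitian) (f : ℝ → ℝ) :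
    (cfc f A).charpoly.roots =
      Multiset.map (fun i => (f (hA.eigenvalues i) : 𝕜)) Finset.univ.val := by
  rw [hA.charpoly_cfc_eq, Polynomial.roots_prod]
  · simp
  · simp [Finset.prod_ne_zero_iff, Polynomial.X_sub_C_ne_zero]

lemma count_eigenvalues_add_rank (hA : A.IsHermitian) (μ : ℝ) :
    Multiset.count μ (Multiset.map hA.eigenvalues Finset.univ.val) +
      (A - (μ : 𝕜) • 1).rank = Fintype.card n := by
  have hcfc : A - (μ : 𝕜) • 1 = cfc (fun x => x - μ) A := by
    rw [cfc_sub .., cfc_id' .., cfc_const .., Algebra.algebraMap_eq_smul_one,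
      RCLike.real_smul_eq_coe_smul (K := 𝕜)]
  rw [hcfc, hA.rank_cfc, Multiset.count_map, Fintype.card_subtype, ← Finset.filter_val,
    Finset.card_val]
  simp only [sub_ne_zero, eq_comm (a := μ)]
  exact Finset.card_filter_add_card_filter_not ..

lemma map_sq_eigenvalues_eq {B : Matrix n n 𝕜} (hA : A.IsHermitian) (hB : B.IsHermitian)
    (h : A * A = B * B + 1) :
    (Multiset.map hA.eigenvalues Finset.univ.val).map (· ^ 2) =
      (Multiset.map hB.eigenvalues Finset.univ.val).map (· ^ 2 + 1) := by
  have hA2 : cfc (fun x : ℝ => x ^ 2) A = A * A := by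
    rw [cfc_pow_id .., sq]
  have hB2 : cfc (fun x : ℝ => x ^ 2 + 1) B = B * B + 1 := by
    rw [cfc_add .., cfc_pow_id .., cfc_const_one .., sq]
  have := hA.roots_charpoly_cfc (· ^ 2)
  rw [hA2, h, ← hB2, hB.roots_charpoly_cfc] at this
  refine Multiset.map_injective (RCLike.ofReal_injective (K := 𝕜)) ?_
  simpa only [Multiset.map_map, Function.comp_def] using this.symm

lemma count_neg_eigenvalues_of_anticommute {B Y : Matrix n n 𝕜} (hBY : (B + Y).IsHermitian)
    (hY : Y * Y = 1) (hB : B * Y = -(Y * B)) {μ : ℝ} (hμ : μ ^ 2 ≠ 1) :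
    Multiset.count (-μ) (Multiset.map hBY.eigenvalues Finset.univ.val) =
      Multiset.count μ (Multiset.map hBY.eigenvalues Finset.univ.val) := by
  have hneg := hBY.count_eigenvalues_add_rank (-μ)
  have hpos := hBY.count_eigenvalues_add_rank μ
  rw [rank_add_sub_smul_eq_rank_add_add_smul hY hB (by exact_mod_cast hμ)] at hpos
  rw [RCLike.ofReal_neg, neg_smul, sub_neg_eq_add] at hneg
  omega

end IsHermitian

lemma IsHermitian.exists_eigenvalues_eq_of_anticommute {N K Y : Matrix n n ℝ}
    (hN : N.IsHermitian) (hK : K.IsHermitian) (hNKY : N = K + Y) (hY : Y * Y = 1)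
    (hKY : K * Y = -(Y * K)) {m r : ℕ} (lam : Fin m → ℝ) (hlam : ∀ k, 0 < lam k)
    (hspec : Multiset.map hK.eigenvalues Finset.univ.val =
      Multiset.map lam Finset.univ.val + Multiset.map (fun k => -lam k) Finset.univ.val +
        Multiset.replicate r 0) :
    ∃ s : Multiset ℝ, Multiset.card s = r ∧ (∀ x ∈ s, x = 1 ∨ x = -1) ∧
      Multiset.map hN.eigenvalues Finset.univ.val =
        Multiset.map (fun k => Real.sqrt (1 + lam k ^ 2)) Finset.univ.val +
          Multiset.map (fun k => -Real.sqrt (1 + lam k ^ 2)) Finset.univ.val + s := by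
  subst hNKY
  set R := Multiset.map (fun k => Real.sqrt (1 + lam k ^ 2)) Finset.univ.val
  have hR : ∀ x ∈ R, x ^ 2 ≠ 1 := by
    simp only [R, Multiset.mem_map]
    rintro _ ⟨k, -, rfl⟩
    rw [Real.sq_sqrt (by positivity)]
    exact (lt_add_of_pos_right 1 (pow_pos (hlam k) 2)).ne'
  have hsq : (Multiset.map hN.eigenvalues Finset.univ.val).map (· ^ 2) =
      (R + R.map Neg.neg).map (· ^ 2) + Multiset.replicate r 1 := by
    rw [hN.map_sq_eigenvalues_eq hK (add_mul_self_of_anticommute hY hKY), hspec]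
    have hsqrt (k : Fin m) : Real.sqrt (1 + lam k ^ 2) ^ 2 = lam k ^ 2 + 1 := by
      rw [Real.sq_sqrt (by positivity), add_comm]
    simp only [R, Multiset.map_add, Multiset.map_map, Function.comp_def, neg_sq, hsqrt,
      Multiset.map_replicate, zero_pow two_ne_zero, zero_add]
  obtain ⟨s, hcard, hs, heq⟩ := Multiset.exists_eq_add_add_of_map_sq_eq
    (fun μ hμ => hN.count_neg_eigenvalues_of_anticommute hY hKY hμ) hR hsq
  refine ⟨s, hcard, hs, ?_⟩
  rw [heq, Multiset.map_map]
  rfl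

end Matrix

lemma exchange_eq_permMatrix (n : ℕ) : exchange n = Fin.revPerm.permMatrix ℝ := by
  ext j k
  simp only [exchange, of_apply, PEquiv.toMatrix_apply, Equiv.toPEquiv_apply, Option.mem_def,
    Option.some.injEq, Fin.revPerm_apply, Fin.ext_iff, Fin.val_rev]
  congr 1
  simp only [eq_iff_iff]
  omega

lemma exchange_mul_exchange (n : ℕ) : exchange n * exchange n = 1 := by
  rw [exchange_eq_permMatrix, ← permMatrix_mul,
    show Fin.revPerm * Fin.revPerm = 1 from Equiv.ext Fin.rev_rev, permMatrix_one]

lemma exchange_transpose (n : ℕ) : (exchange n)ᵀ = exchange n := by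
  rw [exchange_eq_permMatrix, transpose_permMatrix]
  rfl

lemma exchange_mul_mul_exchange {n : ℕ} (B : Matrix (Fin n) (Fin n) ℝ) :
    exchange n * B * exchange n = B.submatrix Fin.rev Fin.rev := by
  rw [exchange_eq_permMatrix, PEquiv.toMatrix_toPEquiv_mul, PEquiv.mul_toMatrix_toPEquiv,
    submatrix_submatrix]
  rfl

lemma toeplitzC_rev_rev (n : ℕ) (f : ℝ → ℂ) (j k : Fin n) :
    toeplitzC n f j.rev k.rev = toeplitzC n f k j := by
  simp only [toeplitzC, of_apply, Fin.val_rev]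
  congr 1
  have := j.isLt
  have := k.isLt
  omega

lemma exchange_mul_mul_exchange_of_toeplitz {n : ℕ} {f : ℝ → ℂ} {A : Matrix (Fin n) (Fin n) ℝ}
    (hA : ∀ j k, (A j k : ℂ) = toeplitzC n f j k) : exchange n * A * exchange n = Aᵀ := by
  ext j k
  rw [exchange_mul_mul_exchange, submatrix_apply, transpose_apply, ← Complex.ofReal_inj, hA, hA,
    toeplitzC_rev_rev]

lemma commute_exchange_add_transpose {n : ℕ} {A : Matrix (Fin n) (Fin n) ℝ}
    (hA : exchange n * A * exchange n = Aᵀ) : Commute (exchange n) (A + Aᵀ) := by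
  have hAt : exchange n * Aᵀ * exchange n = A := by
    simpa only [transpose_mul, exchange_transpose, transpose_transpose, Matrix.mul_assoc]
      using congrArg transpose hA
  calc exchange n * (A + Aᵀ) = exchange n * (A + Aᵀ) * exchange n * exchange n := by
        rw [Matrix.mul_assoc _ (exchange n), exchange_mul_exchange, Matrix.mul_one]
    _ = (A + Aᵀ) * exchange n := by
        rw [Matrix.mul_add, Matrix.add_mul, hA, hAt, add_comm]

lemma inv_mul_mul_inv_sub_one_transpose {n : Type*} [Fintype n] [DecidableEq n]
    {A S : Matrix n n ℝ} (hS : IsUnit S) (hSt : Sᵀ = S) (hSS : S * S = (1 / 2 : ℝ) • (A + Aᵀ)) :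
    (S⁻¹ * A * S⁻¹ - 1)ᵀ = -(S⁻¹ * A * S⁻¹ - 1) := by
  have hdet := (isUnit_iff_isUnit_det S).1 hS
  have hAAt : A + Aᵀ = (2 : ℝ) • (S * S) := by
    rw [hSS, smul_smul]; norm_num
  have hnorm : S⁻¹ * (A + Aᵀ) * S⁻¹ = (2 : ℝ) • 1 := by
    rw [hAAt, Matrix.mul_smul, Matrix.smul_mul, ← Matrix.mul_assoc, nonsing_inv_mul S hdet,
      Matrix.one_mul, mul_nonsing_inv S hdet]
  rw [transpose_sub, transpose_one, transpose_mul, transpose_mul, transpose_nonsing_inv, hSt,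
    ← Matrix.mul_assoc, eq_neg_iff_add_eq_zero, sub_add_sub_comm, ← Matrix.add_mul,
    ← Matrix.mul_add, add_comm Aᵀ, hnorm, two_smul, sub_self]

theorem stmt3_general (n m₁ : ℕ) (f : ℝ → ℂ)
    (A : Matrix (Fin n) (Fin n) ℝ)
    (hA : ∀ j k, (A j k : ℂ) = toeplitzC n f j k)
    (AR : Matrix (Fin n) (Fin n) ℝ)
    (hAR : AR = (1 / 2 : ℝ) • (A + Aᵀ))
    (S : Matrix (Fin n) (Fin n) ℝ) (hSpos : S.PosDef) (hSsq : S * S = AR)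
    (E : Matrix (Fin n) (Fin n) ℝ) (hE : E = S⁻¹ * A * S⁻¹ - 1)
    (hYE : (exchange n * E).IsHermitian)
    (hM : (S⁻¹ * (exchange n * A) * S⁻¹).IsHermitian)
    (lam : Fin m₁ → ℝ) (hlam : ∀ k, 0 < lam k)
    (hspec : Multiset.map hYE.eigenvalues Finset.univ.val =
      Multiset.map lam Finset.univ.val + Multiset.map (fun k => -lam k) Finset.univ.val +
        Multiset.replicate (n - 2 * m₁) 0) :
    ∃ s : Multiset ℝ,
      Multiset.card s = n - 2 * m₁ ∧ (∀ x ∈ s, x = 1 ∨ x = -1) ∧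
      Multiset.map hM.eigenvalues Finset.univ.val =
        Multiset.map (fun k => Real.sqrt (1 + lam k ^ 2)) Finset.univ.val +
          Multiset.map (fun k => -Real.sqrt (1 + lam k ^ 2)) Finset.univ.val + s := by
  set Y := exchange n
  have hSt : Sᵀ = S := (conjTranspose_eq_transpose_of_trivial S).symm.trans hSpos.isHermitian
  have hYS : Commute Y S⁻¹ := commute_nonsing_inv_right <|
    hSpos.posSemidef.commute_of_commute_mul_self <| by
      rw [hSsq, hAR]
      exact (commute_exchange_add_transpose (exchange_mul_mul_exchange_of_toeplitz hA)).smul_right _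
  have hEt : Eᵀ = -E := hE ▸ inv_mul_mul_inv_sub_one_transpose hSpos.isUnit hSt (hSsq.trans hAR)
  have hEY : E * Y = -(Y * E) := by
    have hsymm : (Y * E)ᵀ = Y * E := (conjTranspose_eq_transpose_of_trivial _).symm.trans hYE
    rw [transpose_mul, hEt, exchange_transpose, Matrix.neg_mul] at hsymm
    exact neg_eq_iff_eq_neg.1 hsymm
  have hN : S⁻¹ * (Y * A) * S⁻¹ = Y * E + Y := by
    rw [hE, Matrix.mul_sub, Matrix.mul_one, sub_add_cancel, ← Matrix.mul_assoc, ← hYS.eq]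
    simp only [Matrix.mul_assoc]
  exact hM.exists_eigenvalues_eq_of_anticommute hYE hN (exchange_mul_exchange n)
    (by rw [Matrix.mul_assoc, hEY, Matrix.mul_neg]) lam hlam hspec

/-- With `A_R = A_n(f_R)`, `Y` the exchange matrix and
`E = A_R^{-1/2} A_n(f) A_R^{-1/2} - I`: if the eigenvalues of the symmetric skew-centrosymmetric
matrix `Y E` are `λ₁, …, λ_{m₁}, -λ₁, …, -λ_{m₁}` (all `λ_k > 0`) together with `n - 2 m₁` zero
eigenvalues, then the eigenvalues of `A_R^{-1/2} (Y A_n(f)) A_R^{-1/2}` are exactly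
`±√(1 + λ_k²)`, `k = 1, …, m₁`, together with `n - 2 m₁` eigenvalues each equal to `1` or `-1`. -/
theorem stmt3 (n m₁ : ℕ) (fR fI : ℝ → ℝ) (f : ℝ → ℂ)
    (hf : ∀ θ, f θ = (fR θ : ℂ) + Complex.I * (fI θ : ℂ))
    (hfint : IntegrableOn f (Set.Icc (-Real.pi) Real.pi))
    (hpos : 0 < essInf fR (volume.restrict (Set.Icc (-Real.pi) Real.pi)))
    (A : Matrix (Fin n) (Fin n) ℝ)
    (hA : ∀ j k, (A j k : ℂ) = toeplitzC n f j k)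
    (AR : Matrix (Fin n) (Fin n) ℝ)
    (hAR : AR = (1 / 2 : ℝ) • (A + Aᵀ))
    (S : Matrix (Fin n) (Fin n) ℝ) (hSsymm : S.IsSymm) (hSpos : S.PosDef) (hSsq : S * S = AR)
    (E : Matrix (Fin n) (Fin n) ℝ) (hE : E = S⁻¹ * A * S⁻¹ - 1)
    (hYE : (exchange n * E).IsHermitian)
    (hM : (S⁻¹ * (exchange n * A) * S⁻¹).IsHermitian)
    (lam : Fin m₁ → ℝ) (hlam : ∀ k, 0 < lam k)
    (hspec : Multiset.map hYE.eigenvalues Finset.univ.val =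
      Multiset.map lam Finset.univ.val + Multiset.map (fun k => -lam k) Finset.univ.val +
        Multiset.replicate (n - 2 * m₁) 0) :
    ∃ s : Multiset ℝ,
      Multiset.card s = n - 2 * m₁ ∧ (∀ x ∈ s, x = 1 ∨ x = -1) ∧
      Multiset.map hM.eigenvalues Finset.univ.val =
        Multiset.map (fun k => Real.sqrt (1 + lam k ^ 2)) Finset.univ.val +
          Multiset.map (fun k => -Real.sqrt (1 + lam k ^ 2)) Finset.univ.val + s :=
  stmt3_general n m₁ f A hA AR hAR S hSpos hSsq E hE hYE hM lam hlam hspec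
end

section
/- Let f ∈ L^∞([−π,π]) with |f(θ)| ≥ δ > 0 for all θ ∈ [−π,π], let A_n(f) ∈ ℝ^{n×n} be the Toeplitz matrix generated by f, let A_M = A_n(|f|), let Y_n be the n×n exchange matrix, and let f̃ = f/|f|. Then A_M^{-1} Y_n A_n(f) = Y_n A_n(f̃) + E_n, where ‖E_n‖₂ = o(n) as n → ∞, and every eigenvalue of the symmetric matrix Y_n A_n(f̃) lies in [−1, 1]. -/
open MeasureTheory Matrix Filter

/-- The `n × n` exchange matrix (over `ℂ`), with ones on the main anti-diagonal. -/
def exchangeC (n : ℕ) : Matrix (Fin n) (Fin n) ℂ :=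
  Matrix.of fun j k => if (j : ℕ) + (k : ℕ) + 1 = n then 1 else 0

/-!
Write `p_x(θ) = ∑ⱼ xⱼ e^{ijθ}`. Then `⟪x, A_n(g) y⟫ = (2π)⁻¹ ∫ g · conj(p_x) · p_y` and
`(2π)⁻¹ ∫ |p_x|² = ‖x‖²`, so `‖A_n(g)‖ ≤ ‖g‖_∞` and `Re ⟪x, A_n(|f|) x⟫ ≥ δ ‖x‖²`, whence
`‖A_n(|f|)⁻¹‖ ≤ δ⁻¹`. As `Y_n` is a permutation matrix, `‖E_n‖ ≤ δ⁻¹ ‖f‖_∞ + 1` is even bounded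
in `n`.

The Toeplitz matrices `A_n(f)` are real exactly when all Fourier coefficients of `f` are real,
i.e. (by Parseval) when `f(-θ) = conj (f θ)` almost everywhere. This symmetry passes to
`f̃ = f / |f|`, so the coefficients of `f̃` are real as well and `Y_n A_n(f̃)` is Hermitian.
Its norm is at most `‖f̃‖_∞ ≤ 1`, which confines its spectrum to `[-1, 1]`.
-/

open Set Complex
open scoped Real ComplexConjugate InnerProductSpace Matrix.Norms.L2Operator

section InnerProductSpace

variable {𝕜 E : Type*} [RCLike 𝕜] [NormedAddCommGroup E] [InnerProductSpace 𝕜 E]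

lemma ContinuousLinearMap.opNorm_le_of_norm_inner_le (A : E →L[𝕜] E) {C : ℝ} (hC : 0 ≤ C)
    (h : ∀ x y, ‖⟪x, A y⟫_𝕜‖ ≤ C * (‖x‖ ^ 2 + ‖y‖ ^ 2) / 2) : ‖A‖ ≤ C := by
  refine A.opNorm_le_bound hC fun y => ?_
  rcases eq_or_ne (A y) 0 with hAy | hAy
  · rw [hAy, norm_zero]; positivity
  have hAy' : 0 < ‖A y‖ := norm_pos_iff.mpr hAy
  have hy : 0 < ‖y‖ := norm_pos_iff.mpr fun hy => hAy (by rw [hy, map_zero])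
  -- test against the multiple of `A y` that has the same norm as `y`
  have key := h (((‖y‖ / ‖A y‖ : ℝ) : 𝕜) • A y) y
  rw [inner_smul_left, inner_self_eq_norm_sq_to_K, norm_smul, norm_mul, RCLike.norm_conj,
    RCLike.norm_ofReal, norm_pow, RCLike.norm_ofReal, abs_of_pos (div_pos hy hAy'),
    abs_of_pos hAy', div_mul_cancel₀ _ hAy'.ne'] at key
  refine le_of_mul_le_mul_left ?_ hy
  calc ‖y‖ * ‖A y‖ = ‖y‖ / ‖A y‖ * ‖A y‖ ^ 2 := by field_simp
    _ ≤ C * (‖y‖ ^ 2 + ‖y‖ ^ 2) / 2 := key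
    _ = ‖y‖ * (C * ‖y‖) := by ring

lemma ContinuousLinearMap.mul_norm_le_norm_apply_of_le_re_inner (A : E →L[𝕜] E) {δ : ℝ}
    (h : ∀ x, δ * ‖x‖ ^ 2 ≤ RCLike.re ⟪x, A x⟫_𝕜) (x : E) : δ * ‖x‖ ≤ ‖A x‖ := by
  rcases eq_or_ne x 0 with rfl | hx
  · simp
  have hx' : 0 < ‖x‖ := norm_pos_iff.mpr hx
  refine le_of_mul_le_mul_left ?_ hx'
  calc ‖x‖ * (δ * ‖x‖) = δ * ‖x‖ ^ 2 := by ring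
    _ ≤ RCLike.re ⟪x, A x⟫_𝕜 := h x
    _ ≤ ‖x‖ * ‖A x‖ := re_inner_le_norm x (A x)

end InnerProductSpace

namespace Matrix

variable {𝕜 ι : Type*} [RCLike 𝕜] [Fintype ι] [DecidableEq ι]

lemma norm_inv_le_of_le_re_inner {A : Matrix ι ι 𝕜} {δ : ℝ} (hδ : 0 < δ)
    (h : ∀ x, δ * ‖x‖ ^ 2 ≤ RCLike.re ⟪x, toEuclideanCLM (𝕜 := 𝕜) A x⟫_𝕜) : ‖A⁻¹‖ ≤ δ⁻¹ := by
  have hlow := (toEuclideanCLM (𝕜 := 𝕜) A).mul_norm_le_norm_apply_of_le_re_inner h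
  have hA : IsUnit A := by
    refine mulVec_injective_iff_isUnit.mp fun v w hvw => ?_
    have := hlow (WithLp.toLp 2 (v - w))
    rw [toEuclideanCLM_toLp, mulVec_sub, hvw, sub_self, WithLp.toLp_zero, norm_zero] at this
    simpa [sub_eq_zero] using nonpos_of_mul_nonpos_right this hδ
  rw [cstar_norm_def]
  refine ContinuousLinearMap.opNorm_le_bound _ (inv_nonneg.mpr hδ.le) fun w => ?_
  have hw : toEuclideanCLM (𝕜 := 𝕜) A (toEuclideanCLM (𝕜 := 𝕜) A⁻¹ w) = w := by
    rw [← mul_apply_eq_comp, ← map_mul, mul_nonsing_inv _ ((isUnit_iff_isUnit_det A).mp hA),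
      map_one, one_apply_eq_self]
  rw [inv_mul_eq_div, le_div_iff₀' hδ]
  simpa only [hw] using hlow (toEuclideanCLM (𝕜 := 𝕜) A⁻¹ w)

lemma im_eq_zero_and_re_mem_Icc_of_mem_spectrum {M : Matrix ι ι ℂ} (hM : IsSelfAdjoint M)
    (h1 : ‖M‖ ≤ 1) {μ : ℂ} (hμ : μ ∈ spectrum ℂ M) : μ.im = 0 ∧ μ.re ∈ Icc (-1) 1 := by
  have hone : ‖(1 : Matrix ι ι ℂ)‖ ≤ 1 := by
    rw [cstar_norm_def, map_one]
    exact ContinuousLinearMap.norm_id_le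
  have hμ1 : ‖μ‖ ≤ 1 :=
    (spectrum.norm_le_norm_mul_of_mem hμ).trans (mul_le_one₀ h1 (norm_nonneg _) hone)
  exact ⟨hM.im_eq_zero_of_mem_spectrum hμ, abs_le.mp ((abs_re_le_norm μ).trans hμ1)⟩

end Matrix

noncomputable def trigPoly {n : ℕ} (x : EuclideanSpace ℂ (Fin n)) (θ : ℝ) : ℂ :=
  ∑ j, x j * exp (I * (j : ℕ) * θ)

lemma continuous_trigPoly {n : ℕ} (x : EuclideanSpace ℂ (Fin n)) : Continuous (trigPoly x) := by
  unfold trigPoly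
  fun_prop

lemma exp_neg_I_mul_sub (j k : ℕ) (θ : ℝ) :
    exp (-I * (((j : ℤ) - k : ℤ) : ℂ) * θ) = conj (exp (I * j * θ)) * exp (I * k * θ) := by
  rw [← exp_conj, ← exp_add]
  congr 1
  simp only [map_mul, conj_I, conj_natCast, conj_ofReal]
  push_cast
  ring

lemma inner_toeplitzC_eq_integral {n : ℕ} {g : ℝ → ℂ} (hg : IntervalIntegrable g volume (-π) π)
    (x y : EuclideanSpace ℂ (Fin n)) :
    ⟪x, toEuclideanCLM (𝕜 := ℂ) (toeplitzC n g) y⟫_ℂ =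
      1 / (2 * π) * ∫ θ in (-π)..π, g θ * (conj (trigPoly x θ) * trigPoly y θ) := by
  have hint : ∀ j k : Fin n, IntervalIntegrable
      (fun θ : ℝ =>
        conj (x j) * y k * (g θ * (conj (exp (I * (j : ℕ) * θ)) * exp (I * (k : ℕ) * θ))))
      volume (-π) π := fun j k =>
    (hg.mul_continuousOn (by fun_prop)).const_mul _
  calc ⟪x, toEuclideanCLM (𝕜 := ℂ) (toeplitzC n g) y⟫_ℂ
      = ∑ j, ∑ k, conj (x j) * y k * fCoeff g ((j : ℤ) - k) := by
        simp only [PiLp.inner_apply, RCLike.inner_apply, ofLp_toEuclideanCLM, mulVec,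
          dotProduct, toeplitzC, of_apply, Finset.sum_mul]
        exact Finset.sum_congr rfl fun j _ => Finset.sum_congr rfl fun k _ => by ring
    _ = 1 / (2 * π) * ∑ j, ∑ k, ∫ θ in (-π)..π,
          conj (x j) * y k * (g θ * (conj (exp (I * (j : ℕ) * θ)) * exp (I * (k : ℕ) * θ))) := by
        simp only [fCoeff, exp_neg_I_mul_sub, intervalIntegral.integral_const_mul, Finset.mul_sum]
        exact Finset.sum_congr rfl fun j _ => Finset.sum_congr rfl fun k _ => by ring
    _ = 1 / (2 * π) * ∫ θ in (-π)..π, g θ * (conj (trigPoly x θ) * trigPoly y θ) := by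
        simp only [← intervalIntegral.integral_finsetSum fun k _ => hint _ k]
        rw [← intervalIntegral.integral_finsetSum fun j _ => by
          simpa only [Finset.sum_fn] using IntervalIntegrable.sum _ fun k _ => hint j k]
        congr 1
        refine intervalIntegral.integral_congr fun θ _ => ?_
        rw [trigPoly, trigPoly, map_sum, Finset.sum_mul_sum, Finset.mul_sum]
        refine Finset.sum_congr rfl fun j _ => ?_
        rw [Finset.mul_sum]
        exact Finset.sum_congr rfl fun k _ => by rw [map_mul]; ring

lemma fCoeff_eq_fourierCoeffOn (g : ℝ → ℂ) (k : ℤ) :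
    fCoeff g k = fourierCoeffOn (neg_lt_self Real.pi_pos) g k := by
  rw [fourierCoeffOn_eq_integral, fCoeff, sub_neg_eq_add, ← two_mul, real_smul]
  push_cast
  congr 1
  refine intervalIntegral.integral_congr fun θ _ => ?_
  rw [fourier_coe_apply, smul_eq_mul, mul_comm]
  congr 2
  have := Real.pi_ne_zero
  push_cast
  field_simp

lemma fCoeff_one (k : ℤ) : fCoeff (fun _ => 1) k = if k = 0 then 1 else 0 := by
  have : Fact (0 < π - -π) := ⟨by linarith [Real.pi_pos]⟩
  have hlift : AddCircle.liftIoc (π - -π) (-π) (fun _ => (1 : ℂ)) = fourier 0 := by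
    ext x
    simp [AddCircle.liftIoc]
  rw [fCoeff_eq_fourierCoeffOn, fourierCoeffOn, hlift, fourierCoeff_fourier, Pi.single_apply]

lemma toeplitzC_one (n : ℕ) : toeplitzC n (fun _ => 1) = 1 := by
  ext j k
  simp only [toeplitzC, of_apply, fCoeff_one, one_apply, sub_eq_zero, Nat.cast_inj, Fin.val_inj]

lemma integral_norm_trigPoly_sq {n : ℕ} (x : EuclideanSpace ℂ (Fin n)) :
    ∫ θ in (-π)..π, ‖trigPoly x θ‖ ^ 2 = 2 * π * ‖x‖ ^ 2 := by
  have h := inner_toeplitzC_eq_integral (g := fun _ => 1) intervalIntegrable_const x x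
  simp only [toeplitzC_one, map_one, one_apply_eq_self, inner_self_eq_norm_sq_to_K, one_mul,
    conj_mul', ← ofReal_pow, intervalIntegral.integral_ofReal] at h
  have := Real.pi_pos
  field_simp at h
  apply ofReal_injective
  rw [← h, ← RCLike.ofReal_eq_complex_ofReal]
  push_cast
  ring

lemma norm_inner_toeplitzC_le {n : ℕ} {g : ℝ → ℂ} {C : ℝ} (hg : IntervalIntegrable g volume (-π) π)
    (hgC : ∀ θ ∈ Icc (-π) π, ‖g θ‖ ≤ C) (x y : EuclideanSpace ℂ (Fin n)) :
    ‖⟪x, toEuclideanCLM (𝕜 := ℂ) (toeplitzC n g) y⟫_ℂ‖ ≤ C * (‖x‖ ^ 2 + ‖y‖ ^ 2) / 2 := by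
  have hpi := Real.pi_pos
  have hbound : ∀ θ ∈ Ioc (-π) π, ‖g θ * (conj (trigPoly x θ) * trigPoly y θ)‖ ≤
      C / 2 * ‖trigPoly x θ‖ ^ 2 + C / 2 * ‖trigPoly y θ‖ ^ 2 := by
    intro θ hθ
    have hC := hgC θ (Ioc_subset_Icc_self hθ)
    rw [norm_mul, norm_mul, RCLike.norm_conj]
    nlinarith [two_mul_le_add_sq ‖trigPoly x θ‖ ‖trigPoly y θ‖, norm_nonneg (g θ),
      mul_nonneg (norm_nonneg (trigPoly x θ)) (norm_nonneg (trigPoly y θ))]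
  have hint : ∀ z : EuclideanSpace ℂ (Fin n),
      IntervalIntegrable (fun θ => C / 2 * ‖trigPoly z θ‖ ^ 2) volume (-π) π := fun z =>
    ((continuous_trigPoly z).norm.pow 2).intervalIntegrable _ _ |>.const_mul _
  have hI := intervalIntegral.norm_integral_le_of_norm_le (neg_le_self hpi.le)
    (Filter.Eventually.of_forall hbound) ((hint x).add (hint y))
  rw [intervalIntegral.integral_add (hint x) (hint y), intervalIntegral.integral_const_mul,
    intervalIntegral.integral_const_mul, integral_norm_trigPoly_sq, integral_norm_trigPoly_sq] at hI
  rw [inner_toeplitzC_eq_integral hg, norm_mul, norm_div, norm_one, norm_mul, norm_ofNat,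
    norm_real, Real.norm_of_nonneg hpi.le]
  calc 1 / (2 * π) * ‖∫ θ in (-π)..π, g θ * (conj (trigPoly x θ) * trigPoly y θ)‖
      ≤ 1 / (2 * π) * (C / 2 * (2 * π * ‖x‖ ^ 2) + C / 2 * (2 * π * ‖y‖ ^ 2)) := by gcongr
    _ = C * (‖x‖ ^ 2 + ‖y‖ ^ 2) / 2 := by field_simp

lemma le_re_inner_toeplitzC {n : ℕ} {g : ℝ → ℂ} {δ : ℝ} (hg : IntervalIntegrable g volume (-π) π)
    (hgδ : ∀ θ ∈ Icc (-π) π, δ ≤ (g θ).re) (x : EuclideanSpace ℂ (Fin n)) :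
    δ * ‖x‖ ^ 2 ≤ (⟪x, toEuclideanCLM (𝕜 := ℂ) (toeplitzC n g) x⟫_ℂ).re := by
  have hpi := Real.pi_pos
  have hF : IntervalIntegrable (fun θ => g θ * (conj (trigPoly x θ) * trigPoly x θ))
      volume (-π) π :=
    hg.mul_continuousOn ((continuous_conj.comp (continuous_trigPoly x)).mul
      (continuous_trigPoly x)).continuousOn
  have hre : ∀ θ, (g θ * (conj (trigPoly x θ) * trigPoly x θ)).re =
      (g θ).re * ‖trigPoly x θ‖ ^ 2 := fun θ => by
    rw [conj_mul', ← ofReal_pow, re_mul_ofReal]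
  have hreF : IntervalIntegrable (fun θ => (g θ).re * ‖trigPoly x θ‖ ^ 2) volume (-π) π := by
    have : IntervalIntegrable (fun θ => reCLM (g θ * (conj (trigPoly x θ) * trigPoly x θ)))
        volume (-π) π :=
      ⟨reCLM.integrable_comp hF.1, reCLM.integrable_comp hF.2⟩
    simpa only [reCLM_apply, hre] using this
  have hmono : ∫ θ in (-π)..π, δ * ‖trigPoly x θ‖ ^ 2 ≤
      ∫ θ in (-π)..π, (g θ).re * ‖trigPoly x θ‖ ^ 2 :=
    intervalIntegral.integral_mono_on (neg_le_self hpi.le)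
      ((((continuous_trigPoly x).norm.pow 2).intervalIntegrable _ _).const_mul δ) hreF
      fun θ hθ => mul_le_mul_of_nonneg_right (hgδ θ hθ) (by positivity)
  rw [intervalIntegral.integral_const_mul, integral_norm_trigPoly_sq] at hmono
  rw [inner_toeplitzC_eq_integral hg, ← ofReal_ofNat, ← ofReal_mul, ← ofReal_one, ← ofReal_div,
    re_ofReal_mul, ← reCLM_apply, ← ContinuousLinearMap.intervalIntegral_comp_comm _ hF]
  simp only [reCLM_apply, hre]
  calc δ * ‖x‖ ^ 2 = 1 / (2 * π) * (δ * (2 * π * ‖x‖ ^ 2)) := by field_simp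
    _ ≤ _ := by gcongr

lemma intervalIntegrable_of_norm_le {g : ℝ → ℂ} {C : ℝ} (hg : Measurable g)
    (hgC : ∀ θ ∈ Icc (-π) π, ‖g θ‖ ≤ C) : IntervalIntegrable g volume (-π) π := by
  rw [intervalIntegrable_iff_integrableOn_Icc_of_le (neg_le_self Real.pi_pos.le)]
  exact Measure.integrableOn_of_bounded (M := C) (by simp) hg.aestronglyMeasurable
    ((ae_restrict_iff' measurableSet_Icc).mpr (Filter.Eventually.of_forall hgC))

lemma norm_toeplitzC_le {n : ℕ} {g : ℝ → ℂ} {C : ℝ} (hg : IntervalIntegrable g volume (-π) π)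
    (hgC : ∀ θ ∈ Icc (-π) π, ‖g θ‖ ≤ C) : ‖toeplitzC n g‖ ≤ C :=
  (toEuclideanCLM (𝕜 := ℂ) (toeplitzC n g)).opNorm_le_of_norm_inner_le
    ((norm_nonneg _).trans (hgC 0 ⟨by linarith [Real.pi_pos], Real.pi_pos.le⟩))
    (norm_inner_toeplitzC_le hg hgC)

lemma norm_inv_toeplitzC_le {n : ℕ} {g : ℝ → ℂ} {δ : ℝ} (hδ : 0 < δ)
    (hg : IntervalIntegrable g volume (-π) π) (hgδ : ∀ θ ∈ Icc (-π) π, δ ≤ (g θ).re) :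
    ‖(toeplitzC n g)⁻¹‖ ≤ δ⁻¹ :=
  Matrix.norm_inv_le_of_le_re_inner hδ (le_re_inner_toeplitzC hg hgδ)

lemma exchangeC_eq_permMatrix (n : ℕ) :
    exchangeC n = (Fin.revPerm : Equiv.Perm (Fin n)).permMatrix ℂ := by
  ext j k
  simp only [exchangeC, of_apply, PEquiv.toMatrix_apply, Equiv.toPEquiv_apply, Option.mem_def,
    Option.some.injEq, Fin.revPerm_apply, Fin.ext_iff, Fin.val_rev]
  congr 1
  apply propext
  omega

lemma exchangeC_mul_apply {n : ℕ} (M : Matrix (Fin n) (Fin n) ℂ) (j k : Fin n) :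
    (exchangeC n * M) j k = M j.rev k := by
  rw [exchangeC_eq_permMatrix, PEquiv.toMatrix_toPEquiv_mul]
  rfl

lemma norm_exchangeC_mul_le {n : ℕ} (M : Matrix (Fin n) (Fin n) ℂ) : ‖exchangeC n * M‖ ≤ ‖M‖ := by
  rw [exchangeC_eq_permMatrix]
  exact (norm_mul_le _ _).trans
    (mul_le_of_le_one_left (norm_nonneg _) (permMatrix_l2_opNorm_le _))

lemma isSelfAdjoint_exchangeC_mul_toeplitzC {n : ℕ} {g : ℝ → ℂ}
    (hg : ∀ k, conj (fCoeff g k) = fCoeff g k) : IsSelfAdjoint (exchangeC n * toeplitzC n g) := by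
  ext j k
  rw [star_apply, exchangeC_mul_apply, exchangeC_mul_apply, toeplitzC, of_apply, of_apply,
    RCLike.star_def, hg]
  congr 1
  simp only [Fin.val_rev]
  omega

lemma fCoeff_sub {g h : ℝ → ℂ} (hg : IntervalIntegrable g volume (-π) π)
    (hh : IntervalIntegrable h volume (-π) π) (k : ℤ) :
    fCoeff (fun θ => g θ - h θ) k = fCoeff g k - fCoeff h k := by
  simp only [fCoeff, sub_mul]
  rw [intervalIntegral.integral_sub (hg.mul_continuousOn (by fun_prop))
    (hh.mul_continuousOn (by fun_prop)), mul_sub]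

lemma fCoeff_conj_neg (g : ℝ → ℂ) (k : ℤ) :
    fCoeff (fun θ => conj (g (-θ))) k = conj (fCoeff g k) := by
  have h : ∀ θ : ℝ, conj (g (-θ)) * exp (-I * k * θ) =
      conj (g (-θ) * exp (-I * k * ((-θ : ℝ) : ℂ))) := fun θ => by
    rw [map_mul, ← exp_conj]
    congr 2
    simp
  simp_rw [fCoeff, h]
  rw [intervalIntegral.integral_comp_neg (fun θ => conj (g θ * exp (-I * k * θ))), neg_neg,
    intervalIntegral.integral_of_le (neg_le_self Real.pi_pos.le), integral_conj,
    ← intervalIntegral.integral_of_le (neg_le_self Real.pi_pos.le), map_mul]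
  congr 1
  simp [conj_ofReal, map_ofNat]

lemma ae_eq_zero_of_fourierCoeffOn_eq_zero {a b : ℝ} (hab : a < b) {h : ℝ → ℂ}
    (hL2 : MemLp h 2 (volume.restrict (Ioc a b))) (h0 : ∀ n, fourierCoeffOn hab h n = 0) :
    h =ᵐ[volume.restrict (Ioc a b)] 0 := by
  have hsum := hasSum_sq_fourierCoeffOn hab hL2
  simp only [h0, norm_zero, ne_eq, OfNat.ofNat_ne_zero, not_false_eq_true, zero_pow] at hsum
  have hint : ∫ x in a..b, ‖h x‖ ^ 2 = 0 := by
    simpa [(sub_pos.mpr hab).ne'] using hsum.unique hasSum_zero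
  rw [intervalIntegral.integral_of_le hab.le, integral_eq_zero_iff_of_nonneg
    (fun _ => by positivity) (hL2.integrable_norm_pow two_ne_zero)] at hint
  filter_upwards [hint] with x hx
  simpa using hx

lemma ae_conj_neg_eq_of_fCoeff_im_eq_zero {f : ℝ → ℂ} {C : ℝ} (hf : Measurable f)
    (hfC : ∀ θ ∈ Icc (-π) π, ‖f θ‖ ≤ C) (hreal : ∀ k, (fCoeff f k).im = 0) :
    ∀ᵐ θ ∂volume.restrict (Ioc (-π) π), conj (f (-θ)) = f θ := by
  set h : ℝ → ℂ := fun θ => f θ - conj (f (-θ))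
  have hf' : Measurable fun θ => conj (f (-θ)) := by fun_prop
  have hfC' : ∀ θ ∈ Icc (-π) π, ‖conj (f (-θ))‖ ≤ C := fun θ hθ => by
    rw [RCLike.norm_conj]
    exact hfC _ ⟨by linarith [hθ.2], by linarith [hθ.1]⟩
  have hL2 : MemLp h 2 (volume.restrict (Ioc (-π) π)) := by
    refine MemLp.of_bound (hf.sub hf').aestronglyMeasurable (C + C) ?_
    refine (ae_restrict_iff' measurableSet_Ioc).mpr (Filter.Eventually.of_forall fun θ hθ => ?_)
    exact (norm_sub_le _ _).trans
      (add_le_add (hfC θ (Ioc_subset_Icc_self hθ)) (hfC' θ (Ioc_subset_Icc_self hθ)))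
  have h0 : ∀ k, fourierCoeffOn (neg_lt_self Real.pi_pos) h k = 0 := fun k => by
    rw [← fCoeff_eq_fourierCoeffOn, fCoeff_sub (intervalIntegrable_of_norm_le hf hfC)
      (intervalIntegrable_of_norm_le hf' hfC'), fCoeff_conj_neg, conj_eq_iff_im.mpr (hreal k),
      sub_self]
  filter_upwards [ae_eq_zero_of_fourierCoeffOn_eq_zero _ hL2 h0] with θ hθ
  exact (sub_eq_zero.mp hθ).symm

lemma conj_fCoeff_of_ae_conj_neg_eq {g : ℝ → ℂ}
    (hg : ∀ᵐ θ ∂volume.restrict (Ioc (-π) π), conj (g (-θ)) = g θ) (k : ℤ) :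
    conj (fCoeff g k) = fCoeff g k := by
  rw [← fCoeff_conj_neg, fCoeff_eq_fourierCoeffOn, fCoeff_eq_fourierCoeffOn,
    fourierCoeffOn_congr_ae _ hg]

lemma fCoeff_im_eq_zero_of_toeplitzC_im_eq_zero {f : ℝ → ℂ}
    (hreal : ∀ n : ℕ, ∀ j k : Fin n, (toeplitzC n f j k).im = 0) (k : ℤ) :
    (fCoeff f k).im = 0 := by
  have := hreal (k.natAbs + 1) ⟨k.toNat, by omega⟩ ⟨(-k).toNat, by omega⟩
  rwa [toeplitzC, of_apply, Fin.val_mk, Fin.val_mk, Int.toNat_sub_toNat_neg] at this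

lemma conj_div_norm_of_conj_eq {z w : ℂ} (h : conj z = w) :
    conj (z / (‖z‖ : ℂ)) = w / (‖w‖ : ℂ) := by
  rw [map_div₀, conj_ofReal, h, ← h, RCLike.norm_conj]

/-- Let `f ∈ L^∞([-π,π])` with `|f| ≥ δ > 0` on `[-π,π]` and `A_n(f)` real,
let `A_M = A_n(|f|)`, `Y_n` the exchange matrix and `f̃ = f/|f|`. Then
`A_M⁻¹ Y_n A_n(f) = Y_n A_n(f̃) + E_n` with `‖E_n‖₂ = o(n)` as `n → ∞`, and every eigenvalue of
the symmetric matrix `Y_n A_n(f̃)` lies in `[-1, 1]`. -/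
theorem stmt5 (f : ℝ → ℂ) (δ : ℝ) (hδ : 0 < δ)
    (hmeas : Measurable f)
    (hbdd : ∃ C : ℝ, ∀ θ ∈ Set.Icc (-Real.pi) Real.pi, ‖f θ‖ ≤ C)
    (hlow : ∀ θ ∈ Set.Icc (-Real.pi) Real.pi, δ ≤ ‖f θ‖)
    (hreal : ∀ n : ℕ, ∀ j k : Fin n, (toeplitzC n f j k).im = 0) :
    Tendsto
      (fun n : ℕ =>
        ‖Matrix.toEuclideanCLM (𝕜 := ℂ)
            ((toeplitzC n fun θ => (‖f θ‖ : ℂ))⁻¹ * (exchangeC n * toeplitzC n f) -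
              exchangeC n * toeplitzC n fun θ => f θ / (‖f θ‖ : ℂ))‖ / (n : ℝ))
      atTop (nhds 0) ∧
    ∀ n : ℕ, ∀ μ ∈ spectrum ℂ (exchangeC n * toeplitzC n fun θ => f θ / (‖f θ‖ : ℂ)),
      μ.im = 0 ∧ -1 ≤ μ.re ∧ μ.re ≤ 1 := by
  obtain ⟨C, hC⟩ := hbdd
  have hunit : ∀ θ ∈ Icc (-π) π, ‖f θ / (‖f θ‖ : ℂ)‖ ≤ 1 := fun θ _ => by
    rw [norm_div, norm_real, norm_norm]
    exact div_self_le_one _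
  have hY : ∀ n, ‖exchangeC n * toeplitzC n fun θ => f θ / (‖f θ‖ : ℂ)‖ ≤ 1 := fun n =>
    (norm_exchangeC_mul_le _).trans
      (norm_toeplitzC_le (intervalIntegrable_of_norm_le (by fun_prop) hunit) hunit)
  have hE : ∀ n, ‖(toeplitzC n fun θ => (‖f θ‖ : ℂ))⁻¹ * (exchangeC n * toeplitzC n f) -
      exchangeC n * toeplitzC n fun θ => f θ / (‖f θ‖ : ℂ)‖ ≤ δ⁻¹ * C + 1 := fun n => by
    have hinv := norm_inv_toeplitzC_le (n := n) (g := fun θ => (‖f θ‖ : ℂ)) hδ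
      (intervalIntegrable_of_norm_le (by fun_prop) (C := C) (by simpa using hC))
      (by simpa using hlow)
    have hT := norm_toeplitzC_le (n := n) (intervalIntegrable_of_norm_le hmeas hC) hC
    refine (norm_sub_le _ _).trans (add_le_add ((norm_mul_le _ _).trans ?_) (hY n))
    gcongr
    exact (norm_exchangeC_mul_le _).trans hT
  refine ⟨squeeze_zero (fun n => by positivity)
    (fun n => div_le_div_of_nonneg_right (hE n) n.cast_nonneg)
    (tendsto_const_div_atTop_nhds_zero_nat _), fun n μ hμ => ?_⟩
  have hsymm : ∀ᵐ θ ∂volume.restrict (Ioc (-π) π),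
      conj (f (-θ) / (‖f (-θ)‖ : ℂ)) = f θ / (‖f θ‖ : ℂ) := by
    filter_upwards [ae_conj_neg_eq_of_fCoeff_im_eq_zero hmeas hC
      (fCoeff_im_eq_zero_of_toeplitzC_im_eq_zero hreal)] with θ hθ
    exact conj_div_norm_of_conj_eq hθ
  exact Matrix.im_eq_zero_and_re_mem_Icc_of_mem_spectrum
    (isSelfAdjoint_exchangeC_mul_toeplitzC (conj_fCoeff_of_ae_conj_neg_eq hsymm)) (hY n) hμ
end

section
/- Let f : [−π,π] → ℂ be in the Wiener class (i.e., f(θ) = Σ_{k=−∞}^{∞} a_k e^{−ikθ} with Σ_{k=−∞}^{∞} |a_k| < ∞) and let A_n(f) ∈ ℝ^{n×n} be the Toeplitz matrix generated by f. Let C_n^{(S)} denote the Strang circulant preconditioner for A_n(f) and |C_n^{(S)}| its absolute value circulant. Then for each fixed index j, the j-th eigenvalue of |C_n^{(S)}| (in the Fourier ordering) converges to |f(2πj/n)| as n → ∞; that is, |C_n^{(S)}| → C_n(|f|) as n → ∞. -/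
/-! The `j`-th eigenvalue of `|C_n^{(S)}|` is the modulus of the symmetric partial Fourier sum
`(D_m ⋆ f)(2πj/n)`. Since `∑ |a_k| < ∞`, the Weierstrass M-test makes these partial sums converge to
`f` uniformly in `θ`, so uniformly over all grid points `2πj/n`, and the reverse triangle
inequality carries the convergence over to the moduli. -/

open Filter

theorem tendstoUniformly_sum_Icc_neg {β F : Type*} [NormedAddCommGroup F] [CompleteSpace F]
    {g : ℤ → β → F} {u : ℤ → ℝ} (hu : Summable u) (hgu : ∀ k x, ‖g k x‖ ≤ u k) :
    TendstoUniformly (fun m : ℕ => fun x => ∑ k ∈ Finset.Icc (-(m : ℤ)) m, g k x)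
      (fun x => ∑' k, g k x) atTop :=
  fun V hV => Finset.tendsto_Icc_neg.eventually (tendstoUniformly_tsum hu hgu V hV)

theorem norm_mul_exp_neg_I_mul (c : ℂ) (k : ℤ) (θ : ℝ) :
    ‖c * Complex.exp (-Complex.I * k * θ)‖ = ‖c‖ := by
  have : -Complex.I * k * θ = ((-k * θ : ℝ) : ℂ) * Complex.I := by push_cast; ring
  rw [norm_mul, this, Complex.norm_exp_ofReal_mul_I, mul_one]

theorem stmt6_general (a : ℤ → ℂ) (f : ℝ → ℂ)
    (hsum : Summable fun k : ℤ => ‖a k‖)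
    (hf : ∀ θ : ℝ, HasSum (fun k : ℤ => a k * Complex.exp (-Complex.I * k * θ)) (f θ)) :
    ∀ ε > (0 : ℝ), ∃ N : ℕ, ∀ m ≥ N, ∀ j : Fin (2 * m + 1),
      |‖∑ k ∈ Finset.Icc (-(m : ℤ)) (m : ℤ),
            a k * Complex.exp (-Complex.I * k *
              ((2 * Real.pi * (j : ℕ) / (2 * m + 1) : ℝ) : ℂ))‖ -
          ‖f (2 * Real.pi * (j : ℕ) / (2 * m + 1))‖| < ε := by
  intro ε hε
  have hunif := tendstoUniformly_sum_Icc_neg hsum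
    fun k θ => (norm_mul_exp_neg_I_mul (a k) k θ).le
  rw [show (fun θ : ℝ => ∑' k, a k * Complex.exp (-Complex.I * k * θ)) = f from
    funext fun θ => (hf θ).tsum_eq] at hunif
  obtain ⟨N, hN⟩ := eventually_atTop.mp (Metric.tendstoUniformly_iff.mp hunif ε hε)
  refine ⟨N, fun m hm j => ?_⟩
  rw [abs_sub_comm]
  exact (abs_norm_sub_norm_le _ _).trans_lt (dist_eq_norm (E := ℂ) _ _ ▸ hN m hm _)

/-- Let `f` be in the Wiener class, i.e. `f θ = ∑_{k ∈ ℤ} a_k e^{-ikθ}` with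
`∑ |a_k| < ∞`, and suppose the Toeplitz matrices `A_n(f)` are real (the `a_k` are real). For odd
`n = 2m+1`, the `j`-th eigenvalue of the absolute value Strang circulant `|C_n^{(S)}|` is
`|(D_m ⋆ f)(2πj/n)| = |∑_{k=-m}^m a_k e^{-ik·2πj/n}|`, and the `j`-th eigenvalue of `C_n(|f|)`
is `|f(2πj/n)|`. The theorem asserts `|C_n^{(S)}| → C_n(|f|)` as `n → ∞`: every eigenvalue of the
former approaches the corresponding eigenvalue of the latter. -/
theorem stmt6 (a : ℤ → ℂ) (f : ℝ → ℂ)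
    (hsum : Summable fun k : ℤ => ‖a k‖)
    (hf : ∀ θ : ℝ, HasSum (fun k : ℤ => a k * Complex.exp (-Complex.I * k * θ)) (f θ))
    (hreal : ∀ k : ℤ, (a k).im = 0) :
    ∀ ε > (0 : ℝ), ∃ N : ℕ, ∀ m ≥ N, ∀ j : Fin (2 * m + 1),
      |‖∑ k ∈ Finset.Icc (-(m : ℤ)) (m : ℤ),
            a k * Complex.exp (-Complex.I * k *
              ((2 * Real.pi * (j : ℕ) / (2 * m + 1) : ℝ) : ℂ))‖ -
          ‖f (2 * Real.pi * (j : ℕ) / (2 * m + 1))‖| < ε :=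
  stmt6_general a f hsum hf
end
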